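/- Proposition 2: The following two statements are equivalent: (KL) for every group G (in a fixed universe) and every element w of G ∗ ⟨t⟩∞, if G is nontrivial then G̃ = (G ∗ ⟨t⟩∞)/⟨⟨w⟩⟩ is nontrivial; (KL') for every group G (in the same universe) and every element w of G ∗ ⟨t⟩∞ whose exponent sum equals 1 or −1, the natural map G → G̃ is injective. -/

import Mathlib

open Monoid

/-- `G ∗ ⟨t⟩∞`: the free product of `G` with an infinite cyclic group. -/
abbrev GZ (G : Type*) [Group G] := Coprod G (FreeGroup Unit)

/-- The generator `t` of the infinite cyclic factor. -/
def tGen (G : Type*) [Group G] : GZ G := Coprod.inr (FreeGroup.of ())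

/-- `G̃ = (G ∗ ⟨t⟩∞)/⟨⟨w⟩⟩`. -/
abbrev Gtilde (G : Type*) [Group G] (w : GZ G) :=
  GZ G ⧸ Subgroup.normalClosure {w}

/-- The natural map `G → G̃`. -/
def natMap (G : Type*) [Group G] (w : GZ G) : G →* Gtilde G w :=
  (QuotientGroup.mk' (Subgroup.normalClosure {w})).comp Coprod.inl

/-- The exponent sum homomorphism `G ∗ ⟨t⟩∞ → ℤ` killing `G` and sending `t` to `1`. -/
def expSum (G : Type*) [Group G] : GZ G →* Multiplicative ℤ :=
  Coprod.lift 1 (FreeGroup.lift fun _ => Multiplicative.ofAdd (1 : ℤ))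

universe u

/-!
(KL') ⇒ (KL): if the exponent sum `n` of `w` is `±1`, then `G` embeds in `G̃`; otherwise
`G̃` maps onto `ℤ/|n|` (which is `ℤ` for `n = 0`) with `t ↦ 1`.

(KL) ⇒ (KL'): suppose `1 ≠ g ∈ G` dies in `G̃`. Map `G` to a nontrivial group `H` normally
generated by the image of `g`; then all of `H` dies in `H̃`, hence so does `t` because the
exponent sum is `±1`, and `H̃` is trivial, contradicting (KL).

For `H` take `Sym(X)`, `X = G × ℤ × V` with `V` infinite and `|G| ≤ |V|`, where `G` acts by
left multiplication on the first factor. Commutators with the image of `g` give every `⁅a, b⁆`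
acting on a single fibre `{z} × (ℤ × V)`, and, using the shift on `ℤ`, every permutation of a
slice `{0} × V` is such a commutator. The Baer–Schreier–Ulam argument (a normal subgroup of
`Sym(Y)` containing all permutations supported in some `A` with `|A| = |Y \ A| = |Y|` is
everything, since every permutation is a product of two whose fixed sets have size `|Y|`, and
these are conjugate into `A`) applied first on `ℤ × V` and then on `X` gives all of `Sym(X)`.
-/

open Equiv Set Cardinal Function MulAction
open scoped commutatorElement

universe v

section LargeSets

variable {X : Type*}

theorem Equiv.Perm.exists_eqOn_of_injOn {A : Set X} {f : X → X} (hf : InjOn f A)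
    (h : #↥Aᶜ = #↥(f '' A)ᶜ) : ∃ u : Perm X, EqOn u f A := by
  classical
  obtain ⟨c⟩ := Cardinal.eq.1 h
  refine ⟨(Set.sumCompl A).symm.trans
    (((Set.imageOfInjOn f A hf).sumCongr c).trans (Set.sumCompl _)), fun x hx => ?_⟩
  simp [Set.sumCompl_symm_apply_of_mem hx, Set.imageOfInjOn]

theorem mk_eq_of_subset {s t : Set X} (hst : s ⊆ t) (hs : #s = #X) : #t = #X :=
  le_antisymm (mk_set_le t) (hs ▸ mk_le_mk_of_subset hst)

theorem Equiv.Perm.exists_mapsTo {S T : Set X} (hST : #S ≤ #T) (hS : #↥Sᶜ = #X)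
    (hT : #↥Tᶜ = #X) : ∃ γ : Perm X, MapsTo γ S T := by
  classical
  obtain ⟨j⟩ := hST
  let f : X → X := fun x => if hx : x ∈ S then j ⟨x, hx⟩ else x
  have hf : ∀ x (hx : x ∈ S), f x = j ⟨x, hx⟩ := fun x hx => dif_pos hx
  have hfS : MapsTo f S T := fun x hx => hf x hx ▸ (j _).2
  have hinj : InjOn f S := fun x hx y hy hxy => by
    rw [hf x hx, hf y hy] at hxy
    exact congrArg Subtype.val (j.injective (Subtype.ext hxy))
  obtain ⟨γ, hγ⟩ := exists_eqOn_of_injOn hinj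
    (hS.trans (mk_eq_of_subset (compl_subset_compl.2 hfS.image_subset) hT).symm)
  exact ⟨γ, hfS.congr hγ.symm⟩

theorem Subgroup.mem_of_mk_fixedBy_eq {N : Subgroup (Perm X)} [N.Normal] {A : Set X}
    (hA : #A = #X) (hAc : #↥Aᶜ = #X)
    (hN : ∀ σ : Perm X, (fixedBy X σ)ᶜ ⊆ A → σ ∈ N) {u : Perm X}
    (hu : #(fixedBy X u) = #X) : u ∈ N := by
  obtain ⟨γ, hγ⟩ := Perm.exists_mapsTo (hA ▸ mk_set_le (fixedBy X u)ᶜ)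
    (by rwa [compl_compl]) hAc
  have hconj : γ * u * γ⁻¹ ∈ N := by
    refine hN _ ?_
    rw [← smul_fixedBy, ← smul_set_compl, ← image_smul]
    exact hγ.image_subset
  simpa [mul_assoc] using ‹N.Normal›.conj_mem _ hconj γ⁻¹

variable [Infinite X]

theorem exists_mk_eq_mk_compl_eq : ∃ s : Set X, #s = #X ∧ #↥sᶜ = #X := by
  obtain ⟨e⟩ := Cardinal.eq.1 (show #X = #(X ⊕ X) by
    simp [add_eq_self (aleph0_le_mk X)])
  refine ⟨e ⁻¹' range Sum.inl, ?_, ?_⟩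
  · rw [mk_preimage_equiv, mk_range_eq _ Sum.inl_injective]
  · rw [← preimage_compl, compl_range_inl, mk_preimage_equiv, mk_range_eq _ Sum.inr_injective]

theorem exists_subset_mk_eq_mk_diff_eq {C : Set X} (hC : #C = #X) :
    ∃ C₁ ⊆ C, #C₁ = #X ∧ #↥(C \ C₁) = #X := by
  have : Infinite C := infinite_iff.2 (hC ▸ aleph0_le_mk X)
  obtain ⟨s, hs, hsc⟩ := exists_mk_eq_mk_compl_eq (X := C)
  refine ⟨(↑) '' s, Subtype.coe_image_subset _ _, ?_, ?_⟩
  · rw [mk_image_eq Subtype.val_injective, hs, hC]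
  · rw [← Set.image_val_compl, mk_image_eq Subtype.val_injective, hsc, hC]

theorem mk_eq_or_mk_eq_of_union {a b : Set X} (h : #↥(a ∪ b) = #X) : #a = #X ∨ #b = #X := by
  by_contra! hab
  have ha := (mk_set_le a).lt_of_ne hab.1
  have hb := (mk_set_le b).lt_of_ne hab.2
  exact (h ▸ mk_union_le a b).not_gt (add_lt_of_lt (aleph0_le_mk X) ha hb)

theorem exists_mk_eq_mk_compl_image_union_eq (τ : Perm X) :
    ∃ M : Set X, #M = #X ∧ #↥(M ∪ τ '' M)ᶜ = #X := by
  obtain ⟨s, hs, hsc⟩ := exists_mk_eq_mk_compl_eq (X := X)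
  rw [← inter_union_compl s (τ ⁻¹' s)] at hs
  rcases mk_eq_or_mk_eq_of_union hs with hP | hP
  · refine ⟨s ∩ τ ⁻¹' s, hP, mk_eq_of_subset ?_ hsc⟩
    rw [compl_subset_compl, union_subset_iff, image_subset_iff]
    exact ⟨inter_subset_left, inter_subset_right⟩
  · -- `τ` maps `P = s \ τ⁻¹ s` out of `s`, so one half of `P` avoids the image of the other.
    obtain ⟨M, hMP, hM, hPM⟩ := exists_subset_mk_eq_mk_diff_eq hP
    refine ⟨M, hM, mk_eq_of_subset (fun x hx hxM => ?_) hPM⟩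
    rcases hxM with hxM | ⟨y, hy, rfl⟩
    · exact hx.2 hxM
    · exact (hMP hy).2 hx.1.1

theorem Equiv.Perm.exists_mul_eq_mk_fixedBy_eq (τ : Perm X) :
    ∃ u v : Perm X, u * v = τ ∧ #(fixedBy X u) = #X ∧ #(fixedBy X v) = #X := by
  classical
  obtain ⟨M, hM, hMc⟩ := exists_mk_eq_mk_compl_image_union_eq τ
  obtain ⟨C, hC, hCcard, hCc⟩ := exists_subset_mk_eq_mk_diff_eq hMc
  have hMC : ∀ x ∈ C, x ∉ M ∧ x ∉ τ '' M := fun x hx => by simpa using hC hx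
  let f : X → X := M.piecewise τ id
  have hfM : ∀ x ∈ M, f x = τ x := fun x hx => piecewise_eq_of_mem _ _ _ hx
  have hfC : ∀ x ∈ C, f x = x := fun x hx => piecewise_eq_of_notMem _ _ _ (hMC x hx).1
  have hinj : InjOn f (M ∪ C) := by
    rintro x (hx | hx) y (hy | hy) hxy
    · rw [hfM x hx, hfM y hy] at hxy; exact τ.injective hxy
    · rw [hfM x hx, hfC y hy] at hxy; exact absurd ⟨x, hx, hxy⟩ (hMC y hy).2
    · rw [hfC x hx, hfM y hy] at hxy; exact absurd ⟨y, hy, hxy.symm⟩ (hMC x hx).2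
    · rwa [hfC x hx, hfC y hy] at hxy
  have himage : f '' (M ∪ C) ⊆ M ∪ τ '' M ∪ C := by
    rintro _ ⟨x, hx | hx, rfl⟩
    · exact Or.inl (Or.inr ⟨x, hx, (hfM x hx).symm⟩)
    · exact Or.inr ((hfC x hx).symm ▸ hx)
  have hcompl : ∀ t : Set X, t ⊆ M ∪ τ '' M ∪ C → #↥tᶜ = #X := fun t ht =>
    mk_eq_of_subset (fun x hx hxt => (ht hxt).elim hx.1 hx.2) hCc
  -- `u` agrees with `τ` on `M` and is the identity on `C`: it fixes `C`, and `u⁻¹ * τ` fixes `M`.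
  obtain ⟨u, hu⟩ := Perm.exists_eqOn_of_injOn hinj ((hcompl _
    (union_subset_union_left C subset_union_left)).trans (hcompl _ himage).symm)
  refine ⟨u, u⁻¹ * τ, mul_inv_cancel_left u τ, mk_eq_of_subset (fun x hx => ?_) hCcard,
    mk_eq_of_subset (fun x hx => ?_) hM⟩
  · exact (hu (Or.inr hx)).trans (hfC x hx)
  · rw [mem_fixedBy, Perm.smul_def, Perm.mul_apply, Perm.inv_eq_iff_eq,
      (hu (Or.inl hx)).trans (hfM x hx)]

theorem Subgroup.eq_top_of_forall_compl_fixedBy_subset_mem {N : Subgroup (Perm X)} [N.Normal]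
    {A : Set X} (hA : #A = #X) (hAc : #↥Aᶜ = #X)
    (hN : ∀ σ : Perm X, (fixedBy X σ)ᶜ ⊆ A → σ ∈ N) : N = ⊤ := by
  refine (eq_top_iff' N).2 fun τ => ?_
  obtain ⟨u, v, rfl, hu, hv⟩ := τ.exists_mul_eq_mk_fixedBy_eq
  exact mul_mem (mem_of_mk_fixedBy_eq hA hAc hN hu) (mem_of_mk_fixedBy_eq hA hAc hN hv)

end LargeSets

section Fibers

variable {Z : Type u} {W : Type v}

def Equiv.Perm.prodCongrRightHom : (Z → Perm W) →* Perm (Z × W) where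
  toFun := prodCongrRight
  map_one' := rfl
  map_mul' _ _ := rfl

theorem commutatorElement_prodCongr_prodCongrRight (ζ : Perm Z) (f : Z → Perm W) :
    ⁅prodCongr ζ (Equiv.refl W), prodCongrRight f⁆ =
      prodCongrRight fun z => f (ζ.symm z) * (f z)⁻¹ := by
  ext ⟨z, w⟩ <;> simp [commutatorElement_def, Perm.mul_apply, Perm.inv_def]

theorem Subgroup.commutatorElement_mem_of_left_mem {G : Type*} [Group G] {N : Subgroup G}
    [N.Normal] {a : G} (ha : a ∈ N) (b : G) : ⁅a, b⁆ ∈ N :=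
  commutator_le_left N ⊤ (commutator_mem_commutator ha (mem_top b))

theorem prodCongrRight_mulSingle_commutatorElement_mem [DecidableEq Z]
    {N : Subgroup (Perm (Z × W))} [N.Normal] {ζ : Perm Z} (hζ : prodCongr ζ (Equiv.refl W) ∈ N)
    {z : Z} (hz : ζ z ≠ z) (a b : Perm W) :
    prodCongrRight (Pi.mulSingle (ζ z) ⁅a, b⁆) ∈ N := by
  let M := N.comap Perm.prodCongrRightHom
  let f : Z → Perm W := Pi.mulSingle z a
  have hshift : (fun y => f (ζ.symm y) * (f y)⁻¹) =
      (Pi.mulSingle (ζ z) a * Pi.mulSingle z a⁻¹ : Z → Perm W) := by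
    funext y
    simp only [f, Pi.mul_apply, Pi.mulSingle_apply, Equiv.symm_apply_eq]
    split_ifs <;> first | (exfalso; grind) | group
  have hg : (Pi.mulSingle (ζ z) a * Pi.mulSingle z a⁻¹ : Z → Perm W) ∈ M := by
    have := Subgroup.commutatorElement_mem_of_left_mem hζ (prodCongrRight f)
    rwa [commutatorElement_prodCongr_prodCongrRight, hshift] at this
  have hcomm : ⁅(Pi.mulSingle (ζ z) a * Pi.mulSingle z a⁻¹ : Z → Perm W), Pi.mulSingle (ζ z) b⁆ =
      (Pi.mulSingle (ζ z) ⁅a, b⁆ : Z → Perm W) := by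
    funext y
    simp only [commutatorElement_def, Pi.mul_apply, Pi.inv_apply, Pi.mulSingle_apply]
    split_ifs <;> first | (exfalso; grind) | group
  exact hcomm ▸ Subgroup.commutatorElement_mem_of_left_mem hg (Pi.mulSingle (ζ z) b)

theorem Equiv.Perm.exists_prodCongrRight_mulSingle_eq [DecidableEq Z] {σ : Perm (Z × W)}
    {z : Z} (hσ : (fixedBy (Z × W) σ)ᶜ ⊆ Prod.fst ⁻¹' {z}) :
    ∃ π : Perm W, prodCongrRight (Pi.mulSingle z π) = σ := by
  have hfst : ∀ τ : Perm (Z × W), (fixedBy (Z × W) τ)ᶜ ⊆ Prod.fst ⁻¹' {z} →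
      ∀ w, (τ (z, w)).1 = z := fun τ hτ w =>
    (smul_mem_of_set_mem_fixedBy (set_mem_fixedBy_of_movedBy_subset hτ)).2 rfl
  have hσ' : ∀ w, σ (z, w) = (z, (σ (z, w)).2) := fun w => Prod.ext (hfst σ hσ w) rfl
  have hσinv : ∀ w, σ⁻¹ (z, w) = (z, (σ⁻¹ (z, w)).2) := fun w =>
    Prod.ext (hfst σ⁻¹ (by rwa [fixedBy_inv]) w) rfl
  refine ⟨⟨fun w => (σ (z, w)).2, fun w => (σ⁻¹ (z, w)).2, fun w => ?_, fun w => ?_⟩, ?_⟩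
  · change (σ⁻¹ (z, (σ (z, w)).2)).2 = w
    rw [← hσ']; simp
  · change (σ (z, (σ⁻¹ (z, w)).2)).2 = w
    rw [← hσinv]; simp
  ext1 ⟨y, w⟩
  by_cases hy : y = z
  · subst hy
    simp [← hσ']
  · have : (y, w) ∈ fixedBy (Z × W) σ := by_contra fun h => hy (hσ h)
    simpa [Pi.mulSingle_eq_of_ne hy] using this.symm

theorem mk_preimage_fst_singleton [Nonempty Z] [Infinite W] (hZW : lift.{v} #Z ≤ lift.{u} #W)
    (z : Z) : #↥(Prod.fst ⁻¹' {z} : Set (Z × W)) = #(Z × W) := by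
  rw [preimage_fst_singleton_eq_range, mk_prod,
    mul_eq_right (aleph0_le_lift.2 (aleph0_le_mk W)) hZW (by simp), ← mk_uLift]
  exact mk_congr ((Equiv.ofInjective _ (Prod.mk_right_injective z)).symm.trans Equiv.ulift.symm)

theorem Subgroup.eq_top_of_prodCongrRight_mulSingle_mem [DecidableEq Z] [Nontrivial Z]
    [Infinite W] (hZW : lift.{v} #Z ≤ lift.{u} #W) {N : Subgroup (Perm (Z × W))} [N.Normal]
    (z : Z) (hN : ∀ π : Perm W, prodCongrRight (Pi.mulSingle z π) ∈ N) : N = ⊤ := by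
  obtain ⟨z', hz'⟩ := exists_ne z
  refine N.eq_top_of_forall_compl_fixedBy_subset_mem (mk_preimage_fst_singleton hZW z)
    (mk_eq_of_subset (fun p hp hpz => hz' (hp.symm.trans hpz)) (mk_preimage_fst_singleton hZW z'))
    fun σ hσ => ?_
  obtain ⟨π, rfl⟩ := Perm.exists_prodCongrRight_mulSingle_eq hσ
  exact hN π

end Fibers

theorem exists_commutatorElement_eq_prodCongrRight_mulSingle_zero {V : Type*} (π : Perm V) :
    ∃ a b : Perm (ℤ × V), ⁅a, b⁆ = prodCongrRight (Pi.mulSingle 0 π) := by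
  classical
  refine ⟨prodCongr (Equiv.addRight 1) (Equiv.refl V),
    prodCongrRight fun n => if n < 0 then π else 1, ?_⟩
  rw [commutatorElement_prodCongr_prodCongrRight]
  congr 1
  funext n
  simp only [Equiv.coe_addRight, Equiv.addRight_symm, Pi.mulSingle_apply]
  split_ifs <;> first | (exfalso; omega) | simp

theorem normalClosure_prodCongr_eq_top {Z V : Type u} [Infinite V] (hZV : #Z ≤ #V) {ζ : Perm Z}
    (hζ : ζ ≠ 1) : Subgroup.normalClosure {prodCongr ζ (Equiv.refl (ℤ × V))} = ⊤ := by
  classical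
  obtain ⟨z, hz⟩ : ∃ z, ζ z ≠ z := by
    by_contra! h
    exact hζ (Equiv.ext h)
  have : Nontrivial Z := ⟨⟨ζ z, z, hz⟩⟩
  set N := Subgroup.normalClosure {prodCongr ζ (Equiv.refl (ℤ × V))}
  have hcomm := prodCongrRight_mulSingle_commutatorElement_mem
    (Subgroup.subset_normalClosure (mem_singleton _) : _ ∈ N) hz
  let M := N.comap (Perm.prodCongrRightHom.comp (MonoidHom.mulSingle _ (ζ z)))
  have hM : M = ⊤ := by
    refine M.eq_top_of_prodCongrRight_mulSingle_mem (by simp) 0 fun π => ?_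
    obtain ⟨a, b, hab⟩ := exists_commutatorElement_eq_prodCongrRight_mulSingle_zero π
    exact hab ▸ hcomm a b
  refine N.eq_top_of_prodCongrRight_mulSingle_mem ?_ (ζ z) fun π => (?_ : π ∈ M)
  · simpa using hZV.trans (mk_le_of_injective (Prod.mk_right_injective (0 : ℤ)))
  · simp [hM]

theorem exists_monoidHom_normalClosure_eq_top {G : Type u} [Group G] {g : G} (hg : g ≠ 1) :
    ∃ (H : Type u) (_ : Group H) (φ : G →* H), Nontrivial H ∧
      Subgroup.normalClosure {φ g} = ⊤ := by
  let φ : G →* Perm (G × ℤ × ℕ × G) := MonoidHom.mk' (fun a => prodCongr (Equiv.mulLeft a)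
    (Equiv.refl _)) fun a b => by ext <;> simp [mul_assoc]
  have hζ : Equiv.mulLeft g ≠ 1 := fun h => hg (by simpa using congrArg (· 1) h)
  refine ⟨_, _, φ, inferInstance, normalClosure_prodCongr_eq_top ?_ hζ⟩
  exact mk_le_of_injective (Prod.mk_right_injective 0)

section OneRelator

variable {G H : Type*} [Group G] [Group H]

theorem expSum_tGen : expSum G (tGen G) = Multiplicative.ofAdd 1 := by
  simp [expSum, tGen]

theorem expSum_comp_map (φ : G →* H) :
    (expSum H).comp (Coprod.map φ (MonoidHom.id _)) = expSum G := by
  ext <;> simp [expSum]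

theorem natMap_map_eq_one {φ : G →* H} {w : GZ G} {g : G} (hg : natMap G w g = 1) :
    natMap H (Coprod.map φ (MonoidHom.id _) w) (φ g) = 1 := by
  have := Subgroup.comap_normalClosure_image_ge {w} (Coprod.map φ (MonoidHom.id _))
    ((QuotientGroup.eq_one_iff _).1 hg)
  rw [image_singleton, Subgroup.mem_comap, Coprod.map_apply_inl] at this
  exact (QuotientGroup.eq_one_iff _).2 this

theorem eq_zpowersHom_comp_expSum {Q : Type*} [Group Q] (π : GZ H →* Q)
    (hπ : π.comp Coprod.inl = 1) : π = (zpowersHom Q (π (tGen H))).comp (expSum H) := by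
  ext h
  · simpa [expSum] using DFunLike.congr_fun hπ h
  · simp [expSum, tGen]

theorem subsingleton_Gtilde_of_natMap_eq_one {w : GZ H}
    (hw : expSum H w = Multiplicative.ofAdd 1 ∨ expSum H w = Multiplicative.ofAdd (-1))
    (h : natMap H w = 1) : Subsingleton (Gtilde H w) := by
  let π := QuotientGroup.mk' (Subgroup.normalClosure {w})
  have hπ := eq_zpowersHom_comp_expSum π h
  have hπt : π (tGen H) = 1 := by
    have hπw : π w = 1 := (QuotientGroup.eq_one_iff _).2 (Subgroup.subset_normalClosure rfl)
    rw [hπ] at hπw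
    rcases hw with hw | hw <;> simpa [hw] using hπw
  rw [hπt] at hπ
  refine subsingleton_of_forall_eq 1 fun x => ?_
  obtain ⟨x, rfl⟩ := QuotientGroup.mk'_surjective _ x
  exact (DFunLike.congr_fun hπ x).trans (by simp)

theorem nontrivial_Gtilde_of_natAbs_expSum_ne_one {w : GZ G}
    (hw : (Multiplicative.toAdd (expSum G w)).natAbs ≠ 1) : Nontrivial (Gtilde G w) := by
  set n := Multiplicative.toAdd (expSum G w)
  have : Nontrivial (ZMod n.natAbs) := ZMod.nontrivial_iff.2 hw
  let χ : GZ G →* Multiplicative (ZMod n.natAbs) :=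
    (Int.castAddHom (ZMod n.natAbs)).toMultiplicative.comp (expSum G)
  have hχ : Subgroup.normalClosure {w} ≤ χ.ker := by
    refine Subgroup.normalClosure_le_normal (singleton_subset_iff.2 ?_)
    change Multiplicative.ofAdd ((n : ZMod n.natAbs)) = 1
    rw [(ZMod.intCast_zmod_eq_zero_iff_dvd n n.natAbs).2 Int.natAbs_dvd_self]
    rfl
  refine nontrivial_of_ne (QuotientGroup.mk (tGen G)) 1 fun h => ?_
  have := congrArg (QuotientGroup.lift _ χ hχ) h
  simp [χ, expSum_tGen] at this

end OneRelator

theorem injective_natMap_of_forall_nontrivial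
    (hKL : ∀ (G : Type u) [Group G], ∀ w : GZ G, Nontrivial G → Nontrivial (Gtilde G w))
    {G : Type u} [Group G] {w : GZ G}
    (hw : expSum G w = Multiplicative.ofAdd 1 ∨ expSum G w = Multiplicative.ofAdd (-1)) :
    Injective (natMap G w) := by
  refine (injective_iff_map_eq_one _).2 fun g hg => ?_
  by_contra hne
  obtain ⟨H, _, φ, hH, hφ⟩ := exists_monoidHom_normalClosure_eq_top hne
  set w' := Coprod.map φ (MonoidHom.id _) w
  have hker : Subgroup.normalClosure {φ g} ≤ (natMap H w').ker :=
    Subgroup.normalClosure_le_normal (singleton_subset_iff.2 (natMap_map_eq_one hg))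
  rw [hφ, top_le_iff, MonoidHom.ker_eq_top_iff] at hker
  have hw' : expSum H w' = expSum G w := DFunLike.congr_fun (expSum_comp_map φ) w
  exact not_nontrivial_iff_subsingleton.2
    (subsingleton_Gtilde_of_natMap_eq_one (hw' ▸ hw) hker) (hKL H w' hH)

theorem nontrivial_Gtilde_of_forall_injective
    (hKL' : ∀ (G : Type u) [Group G], ∀ w : GZ G,
      (expSum G w = Multiplicative.ofAdd 1 ∨ expSum G w = Multiplicative.ofAdd (-1)) →
        Injective (natMap G w))
    {G : Type u} [Group G] [Nontrivial G] (w : GZ G) : Nontrivial (Gtilde G w) := by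
  by_cases hw : (Multiplicative.toAdd (expSum G w)).natAbs = 1
  · exact (hKL' G w (Int.natAbs_eq_iff.1 hw)).nontrivial
  · exact nontrivial_Gtilde_of_natAbs_expSum_ne_one hw

/-- **Proposition 2**: the Kervaire–Laudenbach conjecture (KL) is equivalent to
the conjecture (KL'): if the exponent sum of `w` is `±1`, then the natural map
`G → G̃` is injective. -/
theorem proposition2 :
    (∀ (G : Type u) [Group G], ∀ w : GZ G,
        Nontrivial G → Nontrivial (Gtilde G w)) ↔
      (∀ (G : Type u) [Group G], ∀ w : GZ G,
        (expSum G w = Multiplicative.ofAdd 1 ∨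
          expSum G w = Multiplicative.ofAdd (-1)) →
          Function.Injective (natMap G w)) :=
  ⟨fun hKL _ _ _ hw => injective_natMap_of_forall_nontrivial hKL hw,
    fun hKL' _ _ w _ => nontrivial_Gtilde_of_forall_injective hKL' w⟩
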